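/- Let C be a commutative unital ring, R a C-algebra, G a semigroup with zero, and S the set of ~-equivalence classes of G other than the class of 0. Suppose (r_s)_{s∈S} is a C-linearly independent family of elements of R. Define δ : G → R by δ(g) = r_{[g]} if g ≁ 0 and δ(g) = 0 if g ~ 0. Then δ is a central map preserving zero, and t_δ : \overline{CG} → R is a minimal C-linear trace. -/

import Mathlib

/-! Since `δ(0) = 0`, the `C`-linear map `f ↦ ∑ f(g) δ(g)` kills `I₀`, and it is a trace because
`δ(ab) = δ(ba)`. For minimality, `single (ab) c - single (ba) c` is the commutator of `single a c`
and `single b 1`, so modulo `[CG, CG]` every `f` may be pushed onto fixed representatives of the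
`~`-classes, the class of `0` being represented by `0` itself. The trace of `f` is then the
combination of the `r_s` whose coefficients are the class sums of `f`; by linear independence it
vanishes only if every class sum outside `[0]` does, i.e. only if `f` is congruent to a multiple of
the element `0`, which is zero in the contracted ring. -/

/-- The one-step relation: `x = a*b` and `y = b*a`. -/
def simStep {G : Type*} [Mul G] (x y : G) : Prop := ∃ a b : G, x = a * b ∧ y = b * a

/-- The relation `~` on a semigroup: the reflexive-transitive closure of `simStep`. -/
def sim {G : Type*} [Mul G] : G → G → Prop := Relation.ReflTransGen simStep

theorem sim_equiv {G : Type*} [Mul G] : Equivalence (sim (G := G)) :=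
  ⟨fun _ => Relation.ReflTransGen.refl,
   fun h => (@Relation.ReflTransGen.stdSymm _ simStep
      ⟨fun _ _ ⟨a, b, h1, h2⟩ => ⟨b, a, h2, h1⟩⟩).symm _ _ h,
   fun h1 h2 => Relation.ReflTransGen.trans h1 h2⟩

/-- The setoid on `G` given by `~`. -/
def simSetoid (G : Type*) [Mul G] : Setoid G := ⟨sim, sim_equiv⟩

/-- The additive subgroup `[A,A]` generated by commutators. -/
def commutatorSubgroup (A : Type*) [NonUnitalNonAssocRing A] : AddSubgroup A :=
  AddSubgroup.closure {x | ∃ a b : A, x = a * b - b * a}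

/-- The ideal `I₀` of the semigroup ring `CG` consisting of functions supported in `{0}`. -/
noncomputable def I0 (C G : Type*) [CommRing C] [SemigroupWithZero G] :
    TwoSidedIdeal (MonoidAlgebra C G) :=
  TwoSidedIdeal.mk' {f : MonoidAlgebra C G | ∀ g : G, g ≠ 0 → f.coeff g = 0}
    (fun _ _ => rfl)
    (fun {x y} hx hy g hg => by
      show (x + y).coeff g = 0
      rw [MonoidAlgebra.coeff_add, Finsupp.add_apply, hx g hg, hy g hg, add_zero])
    (fun {x} hx g hg => by
      show (-x).coeff g = 0
      rw [MonoidAlgebra.coeff_neg, Finsupp.neg_apply, hx g hg, neg_zero])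
    (fun {x y} hy g hg => by
      classical
      rw [MonoidAlgebra.coeff_mul]
      rw [Finsupp.sum]
      refine Finset.sum_eq_zero fun a _ => ?_
      rw [Finsupp.sum]
      refine Finset.sum_eq_zero fun b hb => ?_
      have hb0 : b = 0 := by
        by_contra h
        exact Finsupp.mem_support_iff.mp hb (hy b h)
      subst hb0
      rw [mul_zero, if_neg fun h => hg h.symm])
    (fun {x y} hx g hg => by
      classical
      rw [MonoidAlgebra.coeff_mul]
      rw [Finsupp.sum]
      refine Finset.sum_eq_zero fun a ha => ?_
      rw [Finsupp.sum]
      refine Finset.sum_eq_zero fun b _ => ?_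
      have ha0 : a = 0 := by
        by_contra h
        exact Finsupp.mem_support_iff.mp ha (hx a h)
      subst ha0
      rw [zero_mul, if_neg fun h => hg h.symm])

/-- The contracted semigroup ring `\overline{CG} = CG / I₀`. -/
abbrev ContractedSemigroupRing (C G : Type*) [CommRing C] [SemigroupWithZero G] :=
  (I0 C G).ringCon.Quotient

/-- The quotient map `π : CG → \overline{CG}`. -/
noncomputable def toCSR (C G : Type*) [CommRing C] [SemigroupWithZero G]
    (f : MonoidAlgebra C G) : ContractedSemigroupRing C G := f

/-- The map `f ↦ ∑_g f(g) • δ(g)` from `CG` to `R`. -/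
def elemSum (C : Type*) {G R : Type*} [CommRing C] [SemigroupWithZero G]
    [AddCommMonoid R] [Module C R] (δ : G → R) (f : MonoidAlgebra C G) : R :=
  f.coeff.sum fun g c => c • δ g

open MonoidAlgebra

section Commutators

variable {A B : Type*} [NonUnitalNonAssocRing A] [NonUnitalNonAssocRing B]

lemma NonUnitalRingHom.map_mem_commutatorSubgroup (φ : A →ₙ+* B) {x : A}
    (hx : x ∈ commutatorSubgroup A) : φ x ∈ commutatorSubgroup B := by
  have hmap : (commutatorSubgroup A).map (φ : A →+ B) ≤ commutatorSubgroup B := by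
    rw [commutatorSubgroup, AddMonoidHom.map_closure]
    refine AddSubgroup.closure_mono ?_
    rintro _ ⟨_, ⟨a, b, rfl⟩, rfl⟩
    exact ⟨φ a, φ b, by simp⟩
  exact hmap ⟨x, hx, rfl⟩

end Commutators

lemma sim_mul_comm {G : Type*} [Mul G] (g h : G) : sim (g * h) (h * g) :=
  Relation.ReflTransGen.single ⟨g, h, rfl, rfl⟩

section SemigroupAlgebra

variable {C G : Type*} [Ring C] [Mul G]

lemma MonoidAlgebra.single_sub_single_mem_commutatorSubgroup {g h : G} (hgh : sim g h) (c : C) :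
    single g c - single h c ∈ commutatorSubgroup (MonoidAlgebra C G) := by
  induction hgh with
  | refl => simp
  | tail _ step ih =>
    obtain ⟨a, b, rfl, rfl⟩ := step
    have hab : single (a * b) c - single (b * a) c ∈ commutatorSubgroup (MonoidAlgebra C G) :=
      AddSubgroup.subset_closure ⟨single a c, single b 1, by simp [single_mul_single]⟩
    simpa using add_mem ih hab

lemma MonoidAlgebra.sub_mapDomain_mem_commutatorSubgroup {φ : G → G} (hφ : ∀ g, sim g (φ g))
    (f : MonoidAlgebra C G) : f - mapDomain φ f ∈ commutatorSubgroup (MonoidAlgebra C G) := by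
  induction f using MonoidAlgebra.induction_linear with
  | zero => simp [mapDomain_zero]
  | add x y hx hy => simpa [mapDomain_add, add_sub_add_comm] using add_mem hx hy
  | single g c => simpa [mapDomain_single] using single_sub_single_mem_commutatorSubgroup (hφ g) c

end SemigroupAlgebra

lemma Finsupp.eq_single_of_linearCombination_eq_zero {C ι M : Type*} [Ring C] [AddCommGroup M]
    [Module C M] {v : ι → M} {i₀ : ι} (hv₀ : v i₀ = 0) (hv : LinearIndepOn C v {i | i ≠ i₀})
    {l : ι →₀ C} (hl : linearCombination C v l = 0) : l = single i₀ (l i₀) := by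
  classical
  have herase : l.erase i₀ = 0 := by
    refine linearIndepOn_iff.mp hv _ (fun i hi hi₀ => by simp [hi₀] at hi) ?_
    rwa [← Finsupp.single_add_erase i₀ l, map_add, linearCombination_single, hv₀, smul_zero,
      zero_add] at hl
  rw [← Finsupp.single_add_erase i₀ l, herase, add_zero, single_eq_same]

section Contracted

variable {C G : Type*} [CommRing C] [SemigroupWithZero G]

lemma toCSR_surjective : Function.Surjective (toCSR C G) := Quotient.mk''_surjective

lemma toCSR_eq_toCSR_iff {f f' : MonoidAlgebra C G} :
    toCSR C G f = toCSR C G f' ↔ ∀ g : G, g ≠ 0 → (f - f').coeff g = 0 := by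
  rw [toCSR, toCSR, RingCon.eq, TwoSidedIdeal.rel_iff]
  exact TwoSidedIdeal.mem_mk' ..

noncomputable def toCSRHom (C G : Type*) [CommRing C] [SemigroupWithZero G] :
    MonoidAlgebra C G →ₙ+* ContractedSemigroupRing C G where
  toFun := toCSR C G
  map_mul' _ _ := rfl
  map_zero' := rfl
  map_add' _ _ := rfl

lemma toCSR_single_zero (c : C) : toCSR C G (single 0 c) = 0 :=
  toCSR_eq_toCSR_iff.mpr fun _ hg => by simp [Finsupp.single_eq_of_ne hg]

variable {R : Type*} [AddCommGroup R] [Module C R]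

lemma elemSum_eq_linearCombination (δ : G → R) (f : MonoidAlgebra C G) :
    elemSum C δ f = Finsupp.linearCombination C δ f.coeff :=
  (Finsupp.linearCombination_apply C f.coeff).symm

@[simp]
lemma elemSum_zero (δ : G → R) : elemSum C δ 0 = 0 := by
  simp [elemSum_eq_linearCombination]

@[simp]
lemma elemSum_single (δ : G → R) (g : G) (c : C) : elemSum C δ (single g c) = c • δ g := by
  simp [elemSum_eq_linearCombination]

lemma elemSum_add (δ : G → R) (f f' : MonoidAlgebra C G) :
    elemSum C δ (f + f') = elemSum C δ f + elemSum C δ f' := by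
  simp [elemSum_eq_linearCombination]

lemma elemSum_sub (δ : G → R) (f f' : MonoidAlgebra C G) :
    elemSum C δ (f - f') = elemSum C δ f - elemSum C δ f' := by
  simp [elemSum_eq_linearCombination]

lemma elemSum_smul (δ : G → R) (c : C) (f : MonoidAlgebra C G) :
    elemSum C δ (c • f) = c • elemSum C δ f := by
  simp [elemSum_eq_linearCombination]

lemma elemSum_mul_comm {δ : G → R} (hδ : ∀ g h, δ (g * h) = δ (h * g))
    (f f' : MonoidAlgebra C G) : elemSum C δ (f * f') = elemSum C δ (f' * f) := by
  induction f using MonoidAlgebra.induction_linear with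
  | zero => simp
  | add x y hx hy => simp only [add_mul, mul_add, elemSum_add, hx, hy]
  | single g c =>
    induction f' using MonoidAlgebra.induction_linear with
    | zero => simp
    | add x y hx hy => simp only [add_mul, mul_add, elemSum_add, hx, hy]
    | single h c' => simp [single_mul_single, hδ g h, mul_comm c]

lemma elemSum_eq_of_toCSR_eq {δ : G → R} (hδ : δ 0 = 0) {f f' : MonoidAlgebra C G}
    (h : toCSR C G f = toCSR C G f') : elemSum C δ f = elemSum C δ f' := by
  have hcoeff := toCSR_eq_toCSR_iff.mp h
  rw [← sub_eq_zero, ← elemSum_sub, elemSum]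
  refine Finset.sum_eq_zero fun g _ => show (f - f').coeff g • δ g = 0 from ?_
  by_cases hg : g = 0
  · rw [hg, hδ, smul_zero]
  · rw [hcoeff g hg, zero_smul]

end Contracted

section Trace

variable {C G R : Type*} [CommRing C] [SemigroupWithZero G] [AddCommGroup R] [Module C R]

variable (C) in
noncomputable def contractedTrace {δ : G → R} (hδ : δ 0 = 0) :
    ContractedSemigroupRing C G → R :=
  Quotient.lift (elemSum C δ) fun _ _ h => elemSum_eq_of_toCSR_eq hδ (Quotient.sound h)

variable {δ : G → R} (hδ : δ 0 = 0)

lemma contractedTrace_toCSR (f : MonoidAlgebra C G) :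
    contractedTrace C hδ (toCSR C G f) = elemSum C δ f := rfl

lemma contractedTrace_add (x y : ContractedSemigroupRing C G) :
    contractedTrace C hδ (x + y) = contractedTrace C hδ x + contractedTrace C hδ y := by
  obtain ⟨f, rfl⟩ := toCSR_surjective x
  obtain ⟨f', rfl⟩ := toCSR_surjective y
  exact elemSum_add δ f f'

lemma contractedTrace_mul_comm (hcentral : ∀ g h, δ (g * h) = δ (h * g))
    (x y : ContractedSemigroupRing C G) :
    contractedTrace C hδ (x * y) = contractedTrace C hδ (y * x) := by
  obtain ⟨f, rfl⟩ := toCSR_surjective x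
  obtain ⟨f', rfl⟩ := toCSR_surjective y
  exact elemSum_mul_comm hcentral f f'

end Trace

lemma toCSR_mem_commutatorSubgroup_of_elemSum_eq_zero {C G R : Type*} [CommRing C]
    [SemigroupWithZero G] [AddCommGroup R] [Module C R] {v : Quotient (simSetoid G) → R}
    (hv₀ : v ⟦0⟧ = 0) (hv : LinearIndepOn C v {s | s ≠ ⟦0⟧}) {f : MonoidAlgebra C G}
    (hf : elemSum C (v ∘ Quotient.mk _) f = 0) :
    toCSR C G f ∈ commutatorSubgroup (ContractedSemigroupRing C G) := by
  classical
  let ψ : Quotient (simSetoid G) → G := fun s => if s = ⟦0⟧ then 0 else s.out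
  have hψ (g : G) : sim g (ψ ⟦g⟧) := by
    by_cases hg : (⟦g⟧ : Quotient (simSetoid G)) = ⟦0⟧
    · rw [show ψ ⟦g⟧ = 0 from if_pos hg]
      exact Quotient.exact hg
    · rw [show ψ ⟦g⟧ = ⟦g⟧.out from if_neg hg]
      exact sim_equiv.symm (Quotient.mk_out (s := simSetoid G) g)
  have hclasses : Finsupp.mapDomain (Quotient.mk _) f.coeff
      = Finsupp.single ⟦0⟧ (Finsupp.mapDomain (Quotient.mk _) f.coeff ⟦0⟧) :=
    Finsupp.eq_single_of_linearCombination_eq_zero hv₀ hv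
      (by rwa [Finsupp.linearCombination_mapDomain, ← elemSum_eq_linearCombination])
  set a := Finsupp.mapDomain (Quotient.mk _) f.coeff ⟦0⟧
  have hrep : mapDomain (fun g => ψ ⟦g⟧) f = single 0 a := by
    change ofCoeff (Finsupp.mapDomain (ψ ∘ Quotient.mk _) f.coeff) = ofCoeff _
    rw [Finsupp.mapDomain_comp, hclasses, Finsupp.mapDomain_single,
      show ψ ⟦0⟧ = 0 from if_pos rfl]
  have := (toCSRHom C G).map_mem_commutatorSubgroup (sub_mapDomain_mem_commutatorSubgroup hψ f)
  rwa [map_sub, hrep, show toCSRHom C G (single 0 a) = 0 from toCSR_single_zero a,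
    sub_zero] at this

theorem semigroupRing_minimal_trace_construction_general
    {C G R : Type*} [CommRing C] [SemigroupWithZero G]
    [NonUnitalRing R] [Module C R]
    (r : Quotient (simSetoid G) → R)
    (hli : LinearIndependent C
      (fun s : {s : Quotient (simSetoid G) // s ≠ Quotient.mk (simSetoid G) 0} => r s.1))
    (δ : G → R)
    (hδ₁ : ∀ g : G, ¬ sim g 0 → δ g = r (Quotient.mk (simSetoid G) g))
    (hδ₂ : ∀ g : G, sim g 0 → δ g = 0) :
    (∀ g h : G, δ (g * h) = δ (h * g)) ∧
    δ 0 = 0 ∧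
    ∃ t : ContractedSemigroupRing C G → R,
      (∀ f : MonoidAlgebra C G, t (toCSR C G f) = elemSum C δ f) ∧
      (∀ x y : ContractedSemigroupRing C G, t (x + y) = t x + t y) ∧
      (∀ x y : ContractedSemigroupRing C G, t (x * y) = t (y * x)) ∧
      (∀ (c : C) (f : MonoidAlgebra C G),
        t (toCSR C G (c • f)) = c • t (toCSR C G f)) ∧
      (∀ x : ContractedSemigroupRing C G, t x = 0 →
        x ∈ commutatorSubgroup (ContractedSemigroupRing C G)) := by
  classical
  let v : Quotient (simSetoid G) → R := fun s => if s = ⟦0⟧ then 0 else r s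
  have hδv : δ = v ∘ Quotient.mk _ := by
    funext g
    by_cases hg : sim g 0
    · exact (hδ₂ g hg).trans (if_pos (Quotient.sound hg)).symm
    · exact (hδ₁ g hg).trans (if_neg fun h => hg (Quotient.exact h)).symm
  have hv₀ : v ⟦0⟧ = 0 := if_pos rfl
  have hv : LinearIndepOn C v {s | s ≠ ⟦0⟧} :=
    LinearIndepOn.congr (v := r) hli fun s hs => (if_neg hs).symm
  subst hδv
  have hcentral (g h : G) : v ⟦g * h⟧ = v ⟦h * g⟧ :=
    congrArg v (Quotient.sound (sim_mul_comm g h))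
  refine ⟨hcentral, hv₀, contractedTrace C hv₀, contractedTrace_toCSR hv₀,
    contractedTrace_add hv₀, contractedTrace_mul_comm hv₀ hcentral, elemSum_smul _, ?_⟩
  intro x hx
  obtain ⟨f, rfl⟩ := toCSR_surjective x
  exact toCSR_mem_commutatorSubgroup_of_elemSum_eq_zero hv₀ hv hx

/-- If `(r_s)_{s ∈ S}` is a `C`-linearly independent family indexed by the
`~`-classes other than the class of `0`, and `δ(g) = r_{[g]}` for `g ≁ 0`, `δ(g) = 0` for
`g ~ 0`, then `δ` is central and preserves zero, and `t_δ` is a minimal `C`-linear trace. -/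
theorem semigroupRing_minimal_trace_construction
    {C G R : Type*} [CommRing C] [SemigroupWithZero G]
    [NonUnitalRing R] [Module C R] [SMulCommClass C R R] [IsScalarTower C R R]
    (r : Quotient (simSetoid G) → R)
    (hli : LinearIndependent C
      (fun s : {s : Quotient (simSetoid G) // s ≠ Quotient.mk (simSetoid G) 0} => r s.1))
    (δ : G → R)
    (hδ₁ : ∀ g : G, ¬ sim g 0 → δ g = r (Quotient.mk (simSetoid G) g))
    (hδ₂ : ∀ g : G, sim g 0 → δ g = 0) :
    (∀ g h : G, δ (g * h) = δ (h * g)) ∧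
    δ 0 = 0 ∧
    ∃ t : ContractedSemigroupRing C G → R,
      (∀ f : MonoidAlgebra C G, t (toCSR C G f) = elemSum C δ f) ∧
      (∀ x y : ContractedSemigroupRing C G, t (x + y) = t x + t y) ∧
      (∀ x y : ContractedSemigroupRing C G, t (x * y) = t (y * x)) ∧
      (∀ (c : C) (f : MonoidAlgebra C G),
        t (toCSR C G (c • f)) = c • t (toCSR C G f)) ∧
      (∀ x : ContractedSemigroupRing C G, t x = 0 →
        x ∈ commutatorSubgroup (ContractedSemigroupRing C G)) :=
  semigroupRing_minimal_trace_construction_general r hli δ hδ₁ hδ₂
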